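/- Let X be a T₀ space which has property S (for every irreducible closed set A ⊆ X, the family {↑a : a ∈ A} is an irreducible subset of the Scott power space Σ K(X), or its Scott closure ◇A = {K ∈ K(X) : K ∩ A ≠ ∅} is an irreducible closed subset of Σ K(X)) and in which every upper-Vietoris-open subset of K(X) is Scott open. If the Scott power space Σ K(X) is a Rudin space, then X is a Rudin space. -/
import Mathlib


open Set Topology TopologicalSpace

universe u v

/-- A subset of a topological space is *saturated* if it equals the intersection of the
open sets containing it. -/
def IsSat {X : Type u} [TopologicalSpace X] (A : Set X) : Prop :=
  A = ⋂₀ {U : Set X | IsOpen U ∧ A ⊆ U}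

/-- The saturation `↑a` of a point `a` : the intersection of all open sets containing `a`. -/
def satPt {X : Type u} [TopologicalSpace X] (a : X) : Set X :=
  ⋂₀ {U : Set X | IsOpen U ∧ a ∈ U}

/-- `KS X` is the collection of all nonempty compact saturated subsets of `X`. -/
def KS (X : Type u) [TopologicalSpace X] : Type u :=
  {K : Set X // K.Nonempty ∧ IsCompact K ∧ IsSat K}

/-- The *Smyth order* on `KS X` : `K ≤ L` iff `L ⊆ K` (reverse inclusion). -/
instance KS.instPartialOrder {X : Type u} [TopologicalSpace X] : PartialOrder (KS X) where
  le K L := L.1 ⊆ K.1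
  le_refl K := subset_rfl
  le_trans K L M h₁ h₂ := by intro x hx; exact h₁ (h₂ hx)
  le_antisymm K L h₁ h₂ := by exact Subtype.ext (subset_antisymm h₂ h₁)

/-- The *upper Vietoris topology* on `KS X`, generated by the sets `□U = {K | K ⊆ U}`
for `U` open in `X`.  The resulting space is the Smyth power space `P_S(X)`. -/
def upperVietoris (X : Type u) [TopologicalSpace X] : TopologicalSpace (KS X) :=
  TopologicalSpace.generateFrom
    {S : Set (KS X) | ∃ U : Set X, IsOpen U ∧ S = {K : KS X | K.1 ⊆ U}}

/-- Scott-open subsets of a preorder: upper sets inaccessible by suprema of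
(nonempty) directed sets. -/
def ScottOpen {P : Type u} [Preorder P] (U : Set P) : Prop :=
  IsUpperSet U ∧ ∀ d : Set P, d.Nonempty → DirectedOn (· ≤ ·) d →
    ∀ a : P, IsLUB d a → a ∈ U → (d ∩ U).Nonempty

/-- The Scott topology of a preorder. -/
def scottTop (P : Type u) [Preorder P] : TopologicalSpace P where
  IsOpen := ScottOpen
  isOpen_univ := ⟨isUpperSet_univ, fun d hd _ _ _ _ => by simpa using hd⟩
  isOpen_inter := by
    rintro U V ⟨hUu, hUd⟩ ⟨hVu, hVd⟩
    refine ⟨hUu.inter hVu, fun d hd hdir a ha haUV => ?_⟩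
    obtain ⟨x, hxd, hxU⟩ := hUd d hd hdir a ha haUV.1
    obtain ⟨y, hyd, hyV⟩ := hVd d hd hdir a ha haUV.2
    obtain ⟨z, hzd, hxz, hyz⟩ := hdir x hxd y hyd
    exact ⟨z, hzd, hUu hxz hxU, hVu hyz hyV⟩
  isOpen_sUnion := by
    intro S hS
    refine ⟨isUpperSet_sUnion fun s hs => (hS s hs).1, fun d hd hdir a ha haU => ?_⟩
    obtain ⟨t, htS, hat⟩ := haU
    obtain ⟨x, hxd, hxt⟩ := (hS t htS).2 d hd hdir a ha hat
    exact ⟨x, hxd, t, htS, hxt⟩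

/-- A topological space is *well-filtered* if for every nonempty family of nonempty compact
saturated sets which is filtered under reverse inclusion and every open `U` containing the
intersection of the family, some member of the family is contained in `U`. -/
def WellFiltered (X : Type u) [TopologicalSpace X] : Prop :=
  ∀ 𝒦 : Set (Set X), 𝒦.Nonempty →
    (∀ K ∈ 𝒦, K.Nonempty ∧ IsCompact K ∧ IsSat K) →
    (∀ K₁ ∈ 𝒦, ∀ K₂ ∈ 𝒦, ∃ K₃ ∈ 𝒦, K₃ ⊆ K₁ ∧ K₃ ⊆ K₂) →
    ∀ U : Set X, IsOpen U → ⋂₀ 𝒦 ⊆ U → ∃ K ∈ 𝒦, K ⊆ U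

/-- The specialization order of a topological space: `x ≤ y` iff `x ∈ cl {y}`. -/
def specLE {X : Type u} [TopologicalSpace X] (x y : X) : Prop := x ∈ closure {y}

/-- Least upper bound with respect to an explicit relation. -/
def RelLUB {P : Type u} (r : P → P → Prop) (d : Set P) (a : P) : Prop :=
  (∀ x ∈ d, r x a) ∧ ∀ b : P, (∀ x ∈ d, r x b) → r a b

/-- Scott openness with respect to an explicit relation. -/
def RelScottOpen {P : Type u} (r : P → P → Prop) (U : Set P) : Prop :=
  (∀ ⦃x y : P⦄, x ∈ U → r x y → y ∈ U) ∧
  ∀ d : Set P, d.Nonempty → DirectedOn r d → ∀ a : P, RelLUB r d a → a ∈ U → (d ∩ U).Nonempty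

/-- A `d`-space (monotone convergence space): the specialization order is directed complete
and every open set is Scott open with respect to the specialization order. -/
def DSpace (X : Type u) [TopologicalSpace X] : Prop :=
  (∀ d : Set X, d.Nonempty → DirectedOn specLE d → ∃ a : X, RelLUB specLE d a) ∧
  ∀ U : Set X, IsOpen U → RelScottOpen specLE U

/-- A space is *sober* if every irreducible closed set is the closure of a unique point. -/
def SoberSp (Z : Type u) [TopologicalSpace Z] : Prop :=
  ∀ A : Set Z, IsClosed A → IsIrreducible A → ∃! z : Z, A = closure {z}

/-- A closed set `A` is a *Rudin set* if there is a (nonempty) family of nonempty compact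
saturated sets, filtered under reverse inclusion, such that `A` is a minimal closed set
meeting every member of the family. -/
def RudinSet {X : Type u} [TopologicalSpace X] (A : Set X) : Prop :=
  IsClosed A ∧
  ∃ 𝒦 : Set (Set X), 𝒦.Nonempty ∧
    (∀ K ∈ 𝒦, K.Nonempty ∧ IsCompact K ∧ IsSat K) ∧
    (∀ K₁ ∈ 𝒦, ∀ K₂ ∈ 𝒦, ∃ K₃ ∈ 𝒦, K₃ ⊆ K₁ ∧ K₃ ⊆ K₂) ∧
    (∀ K ∈ 𝒦, (A ∩ K).Nonempty) ∧
    (∀ B : Set X, IsClosed B → (∀ K ∈ 𝒦, (B ∩ K).Nonempty) → B ⊆ A → B = A)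

/-- A *Rudin space*: every irreducible closed subset is a Rudin set. -/
def RudinSpace (X : Type u) [TopologicalSpace X] : Prop :=
  ∀ A : Set X, IsClosed A → IsIrreducible A → RudinSet A

/-- A closed set `A` is *well-filtered determined* (WD) if every continuous map into a
well-filtered T₀ space sends it to a set whose closure is a point closure. -/
def WDSet {X : Type u} [TopologicalSpace X] (A : Set X) : Prop :=
  ∀ (Y : Type v) [TopologicalSpace Y] [T0Space Y], WellFiltered Y →
    ∀ f : X → Y, Continuous f → ∃ y : Y, closure (f '' A) = closure {y}

/-- A *well-filtered determined (WD) space*: every irreducible closed subset is WD. -/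
def WDSpace (X : Type u) [TopologicalSpace X] : Prop :=
  ∀ A : Set X, IsClosed A → IsIrreducible A → WDSet.{u, v} A

/-- Property S: for every irreducible closed set `A`, the family `{↑a : a ∈ A}` is an
irreducible subset of the Scott power space `Σ K(X)`, or
`◇A = {K ∈ K(X) : K ∩ A ≠ ∅}` is an irreducible closed subset of `Σ K(X)`. -/
def PropertyS (X : Type u) [TopologicalSpace X] : Prop :=
  ∀ A : Set X, IsClosed A → IsIrreducible A →
    @IsIrreducible (KS X) (scottTop (KS X)) {K : KS X | ∃ a ∈ A, K.1 = satPt a} ∨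
    (@IsClosed (KS X) (scottTop (KS X)) {K : KS X | (K.1 ∩ A).Nonempty} ∧
      @IsIrreducible (KS X) (scottTop (KS X)) {K : KS X | (K.1 ∩ A).Nonempty})

/-- The order of Jia's dcpo on `ℕ × ℕ × (ℕ ∪ {∞})`:
`(i₁,j₁,k₁) ≤ (i₂,j₂,k₂)` iff (`i₁ = i₂`, `j₁ = j₂` and `k₁ ≤ k₂`) or
(`i₂ = i₁ + 1`, `k₁ ≤ j₂` and `k₂ = ∞`). -/
def LJiaLE (a b : ℕ × ℕ × WithTop ℕ) : Prop :=
  (a.1 = b.1 ∧ a.2.1 = b.2.1 ∧ a.2.2 ≤ b.2.2) ∨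
  (b.1 = a.1 + 1 ∧ a.2.2 ≤ (b.2.1 : WithTop ℕ) ∧ b.2.2 = ⊤)


section AuxSat
variable {Y : Type u} [TopologicalSpace Y]

lemma mem_sat_iff {A : Set Y} {x : Y} :
    x ∈ ⋂₀ {U : Set Y | IsOpen U ∧ A ⊆ U} ↔ (A ∩ closure {x}).Nonempty := by
  constructor
  · intro hx
    by_contra h
    have hAU : A ⊆ (closure {x})ᶜ := fun a ha hc => h ⟨a, ha, hc⟩
    exact (mem_sInter.1 hx _ ⟨isClosed_closure.isOpen_compl, hAU⟩) (subset_closure rfl)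
  · rintro ⟨a, haA, hacl⟩
    refine mem_sInter.2 fun U hU => ?_
    obtain ⟨y, hyU, hy⟩ := mem_closure_iff.1 hacl U hU.1 (hU.2 haA)
    exact hy ▸ hyU

lemma isSat_iff {A : Set Y} :
    IsSat A ↔ ∀ x : Y, (A ∩ closure {x}).Nonempty → x ∈ A := by
  constructor
  · intro h x hx
    rw [h]; exact mem_sat_iff.2 hx
  · intro h
    refine Subset.antisymm (fun x hx => mem_sInter.2 fun U hU => hU.2 hx)
      (fun x hx => h x (mem_sat_iff.1 hx))

lemma mem_satPt_iff {a x : Y} : x ∈ satPt a ↔ a ∈ closure {x} := by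
  constructor
  · intro h
    refine mem_closure_iff.2 fun U hU haU => ⟨x, mem_sInter.1 h U ⟨hU, haU⟩, rfl⟩
  · intro h
    refine mem_sInter.2 fun U hU => ?_
    obtain ⟨y, hyU, hy⟩ := mem_closure_iff.1 h U hU.1 hU.2
    exact hy ▸ hyU

lemma mem_satPt_self (a : Y) : a ∈ satPt a :=
  mem_satPt_iff.2 (subset_closure rfl)

lemma satPt_subset {a : Y} {U : Set Y} (hU : IsOpen U) (haU : a ∈ U) : satPt a ⊆ U :=
  fun _ hx => mem_sInter.1 hx U ⟨hU, haU⟩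

lemma isCompact_satPt (a : Y) : IsCompact (satPt a) := by
  classical
  apply isCompact_of_finite_subcover
  intro ι V hV hcov
  obtain ⟨i, hi⟩ := mem_iUnion.1 (hcov (mem_satPt_self a))
  refine ⟨{i}, fun x hx => ?_⟩
  exact mem_iUnion₂.2 ⟨i, Finset.mem_singleton_self i, satPt_subset (hV i) hi hx⟩

lemma isSat_satPt (a : Y) : IsSat (satPt a) := by
  refine Subset.antisymm (fun x hx => mem_sInter.2 fun U hU => hU.2 hx) ?_
  intro x hx
  refine mem_sInter.2 fun U hU => ?_
  exact mem_sInter.1 hx U ⟨hU.1, satPt_subset hU.1 hU.2⟩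

end AuxSat

/-- `↑a` as an element of `KS Y`. -/
def satK {Y : Type u} [TopologicalSpace Y] (a : Y) : KS Y :=
  ⟨satPt a, ⟨a, mem_satPt_self a⟩, isCompact_satPt a, isSat_satPt a⟩

section AuxScott
variable {P : Type u} [Preorder P]

lemma scottOpen_compl_lower {C : Set P}
    (hC : ScottOpen Cᶜ) {x y : P} (hx : x ∈ C) (hyx : y ≤ x) : y ∈ C := by
  by_contra hy
  exact (hC.1 hyx hy) hx

lemma le_mem_scott_closure {x y : P} (h : y ≤ x) :
    y ∈ @closure P (scottTop P) {x} := by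
  letI := scottTop P
  exact scottOpen_compl_lower (isClosed_closure (s := {x})).isOpen_compl
    (subset_closure rfl) h

lemma isSat_scott_upper {𝓚 : Set P}
    (h : @IsSat P (scottTop P) 𝓚) {K L : P} (hK : K ∈ 𝓚) (hKL : K ≤ L) : L ∈ 𝓚 := by
  letI := scottTop P
  exact (isSat_iff.1 h) L ⟨K, hK, le_mem_scott_closure hKL⟩

end AuxScott

lemma isCompact_sUnion_KS {X : Type u} [TopologicalSpace X]
    (hvs : ∀ U : Set (KS X), @IsOpen (KS X) (upperVietoris X) U → ScottOpen U)
    {𝓚 : Set (KS X)} (h𝓚 : @IsCompact (KS X) (scottTop (KS X)) 𝓚) :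
    IsCompact (⋃ K ∈ 𝓚, (K : KS X).1) := by
  classical
  letI : TopologicalSpace (KS X) := scottTop (KS X)
  apply isCompact_of_finite_subcover
  intro ι V hV hcov
  have hbox : ∀ t : Finset ι, IsOpen {L : KS X | L.1 ⊆ ⋃ i ∈ t, V i} := fun t =>
    hvs _ (isOpen_generateFrom_of_mem ⟨_, isOpen_biUnion (fun i _ => hV i), rfl⟩)
  have hcov2 : 𝓚 ⊆ ⋃ t : Finset ι, {L : KS X | L.1 ⊆ ⋃ i ∈ t, V i} := by
    intro K hK
    obtain ⟨t, ht⟩ := K.2.2.1.elim_finite_subcover V hV (fun x hx => hcov (mem_biUnion hK hx))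
    exact mem_iUnion.2 ⟨t, ht⟩
  obtain ⟨T, hT⟩ := h𝓚.elim_finite_subcover _ hbox hcov2
  refine ⟨T.biUnion id, fun x hx => ?_⟩
  obtain ⟨K, hK, hxK⟩ := mem_iUnion₂.1 hx
  obtain ⟨t, ht, hKt⟩ := mem_iUnion₂.1 (hT hK)
  obtain ⟨i, hi, hxV⟩ := mem_iUnion₂.1 (hKt hxK)
  exact mem_iUnion₂.2 ⟨i, Finset.mem_biUnion.2 ⟨t, ht, hi⟩, hxV⟩

/-- Let `X` be a `T₀` space which has property S and in which every
upper-Vietoris-open subset of `K(X)` is Scott open.  If the Scott power space `Σ K(X)` is a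
Rudin space, then `X` is a Rudin space. -/
theorem stmt19 {X : Type u} [TopologicalSpace X] [T0Space X]
    (hS : PropertyS X)
    (hvs : ∀ U : Set (KS X), @IsOpen (KS X) (upperVietoris X) U → ScottOpen U)
    (hrd : @RudinSpace (KS X) (scottTop (KS X))) :
    RudinSpace X :=  by
  classical
  intro A hA hAirr
  letI : TopologicalSpace (KS X) := scottTop (KS X)
  -- `◇B` is Scott closed for every closed `B`
  have diamond_closed : ∀ B : Set X, IsClosed B →
      IsClosed {K : KS X | (K.1 ∩ B).Nonempty} := by
    intro B hB
    rw [← isOpen_compl_iff]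
    have hset : {K : KS X | (K.1 ∩ B).Nonempty}ᶜ = {K : KS X | K.1 ⊆ Bᶜ} := by
      ext K
      simp only [mem_compl_iff, mem_setOf_eq]
      constructor
      · intro h x hx hxB
        exact h ⟨x, hx, hxB⟩
      · rintro h ⟨x, hx, hxB⟩
        exact h hx hxB
    rw [hset]
    exact hvs _ (isOpen_generateFrom_of_mem ⟨Bᶜ, hB.isOpen_compl, rfl⟩)
  set ΞA : Set (KS X) := {K : KS X | ∃ a ∈ A, K.1 = satPt a} with hΞA
  set dA : Set (KS X) := {K : KS X | (K.1 ∩ A).Nonempty} with hdA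
  -- extract a common irreducible closed set `C` together with a closed operator `D`
  obtain ⟨C, hCc, hCi, hCdiam, hCsat, D, hDc, hDsub, hDsatK, hDdiam⟩ :
      ∃ C : Set (KS X), IsClosed C ∧ IsIrreducible C ∧ C ⊆ dA ∧
        (∀ a ∈ A, satK a ∈ C) ∧
        ∃ D : Set X → Set (KS X),
          (∀ B : Set X, IsClosed B → B ⊆ A → IsClosed (D B)) ∧
          (∀ B : Set X, IsClosed B → B ⊆ A → D B ⊆ C) ∧
          (∀ B : Set X, ∀ b ∈ B, satK b ∈ D B) ∧
          (∀ B : Set X, IsClosed B → B ⊆ A → D B ⊆ {K : KS X | (K.1 ∩ B).Nonempty}) := by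
    have hΞsub : ∀ B : Set X, {K : KS X | ∃ b ∈ B, K.1 = satPt b} ⊆
        {K : KS X | (K.1 ∩ B).Nonempty} := by
      rintro B K ⟨b, hb, hKb⟩
      exact ⟨b, hKb ▸ mem_satPt_self b, hb⟩
    rcases hS A hA hAirr with h1 | h2
    · refine ⟨closure ΞA, isClosed_closure, h1.closure, ?_, ?_,
        fun B => closure {K : KS X | ∃ b ∈ B, K.1 = satPt b},
        fun B hB _ => isClosed_closure, ?_, ?_, ?_⟩
      · exact closure_minimal (hΞsub A) (diamond_closed A hA)
      · exact fun a ha => subset_closure ⟨a, ha, rfl⟩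
      · intro B _ hBA
        exact closure_mono (fun K => by rintro ⟨b, hb, hKb⟩; exact ⟨b, hBA hb, hKb⟩)
      · exact fun B b hb => subset_closure ⟨b, hb, rfl⟩
      · intro B hB _
        exact closure_minimal (hΞsub B) (diamond_closed B hB)
    · refine ⟨dA, h2.1, h2.2, subset_rfl, fun a ha => ⟨a, mem_satPt_self a, ha⟩,
        fun B => {K : KS X | (K.1 ∩ B).Nonempty},
        fun B hB _ => diamond_closed B hB, ?_, ?_, fun B _ _ => subset_rfl⟩
      · rintro B _ hBA K ⟨x, hxK, hxB⟩
        exact ⟨x, hxK, hBA hxB⟩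
      · exact fun B b hb => ⟨b, mem_satPt_self b, hb⟩
  obtain ⟨-, 𝒦, h𝒦ne, h𝒦mem, h𝒦filt, h𝒦meet, h𝒦min⟩ := hrd C hCc hCi
  refine ⟨hA, (fun 𝓚 => ⋃ K ∈ 𝓚, (K : KS X).1) '' 𝒦, h𝒦ne.image _, ?_, ?_, ?_, ?_⟩
  · -- members are nonempty compact saturated
    rintro S ⟨𝓚, h𝓚, rfl⟩
    obtain ⟨hne, hcomp, hsat⟩ := h𝒦mem 𝓚 h𝓚
    refine ⟨?_, isCompact_sUnion_KS hvs hcomp, ?_⟩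
    · obtain ⟨K, hK⟩ := hne
      obtain ⟨x, hx⟩ := K.2.1
      exact ⟨x, mem_biUnion hK hx⟩
    · refine isSat_iff.2 fun x ⟨y, hy, hycl⟩ => ?_
      obtain ⟨K, hK, hyK⟩ := mem_iUnion₂.1 hy
      exact mem_biUnion hK (isSat_iff.1 K.2.2.2 x ⟨y, hyK, hycl⟩)
  · -- filtered
    rintro S₁ ⟨𝓚₁, h𝓚₁, rfl⟩ S₂ ⟨𝓚₂, h𝓚₂, rfl⟩
    obtain ⟨𝓚₃, h𝓚₃, h31, h32⟩ := h𝒦filt 𝓚₁ h𝓚₁ 𝓚₂ h𝓚₂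
    refine ⟨⋃ K ∈ 𝓚₃, (K : KS X).1, ⟨𝓚₃, h𝓚₃, rfl⟩, ?_, ?_⟩ <;>
      · intro x hx
        obtain ⟨K, hK, hxK⟩ := mem_iUnion₂.1 hx
        first
          | exact mem_biUnion (h31 hK) hxK
          | exact mem_biUnion (h32 hK) hxK
  · -- A meets every member
    rintro S ⟨𝓚, h𝓚, rfl⟩
    obtain ⟨K, hKC, hK𝓚⟩ := h𝒦meet 𝓚 h𝓚
    obtain ⟨x, hxK, hxA⟩ := hCdiam hKC
    exact ⟨x, hxA, mem_biUnion hK𝓚 hxK⟩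
  · -- minimality
    intro B hB hBmeet hBA
    have hDB : D B = C := by
      refine h𝒦min (D B) (hDc B hB hBA) ?_ (hDsub B hB hBA)
      intro 𝓚 h𝓚
      obtain ⟨b, hbB, hbU⟩ := hBmeet _ ⟨𝓚, h𝓚, rfl⟩
      obtain ⟨K, hK𝓚, hbK⟩ := mem_iUnion₂.1 hbU
      have hsub : satPt b ⊆ K.1 := fun x hx =>
        isSat_iff.1 K.2.2.2 x ⟨b, hbK, mem_satPt_iff.1 hx⟩
      have hsatK𝓚 : satK b ∈ 𝓚 :=
        isSat_scott_upper (h𝒦mem 𝓚 h𝓚).2.2 hK𝓚 hsub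
      exact ⟨satK b, hDsatK B b hbB, hsatK𝓚⟩
    refine Subset.antisymm hBA fun a ha => ?_
    have : satK a ∈ D B := hDB.symm ▸ hCsat a ha
    obtain ⟨b, hbsat, hbB⟩ := hDdiam B hB hBA this
    have : a ∈ closure B := closure_mono (singleton_subset_iff.2 hbB) (mem_satPt_iff.1 hbsat)
    rwa [hB.closure_eq] at this
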